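/- arXiv:1411.6606 — 6 statements merged into one kernel-verified Lean document; each statement's English description precedes it below -/
import Mathlib

section
/- Each summand in the definition of the Baxter numbers is a natural number: for all n ≥ 1 and 1 ≤ k ≤ n, the product \binom{n+1}{1}\binom{n+1}{2} divides \binom{n+1}{k-1}\binom{n+1}{k}\binom{n+1}{k+1}. -/
/-!
Write `N = n + 1` and `a, b, c` for the three consecutive binomials. The denominator is
`N * C(N, 2) = n * N ^ 2 / 2` and `n`, `N` are coprime, so it suffices to show `N ^ 2 ∣ 2abc` and
`n ∣ 2abc`. From `C(N, j) * j.descFactorial r = N.descFactorial r * C(N - r, j - r)` we get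
`N ∣ C(N, j) * j` and `n ∣ C(N, j) * j * (j - 1)`. Since the multipliers of `a, b, c` are
consecutive, differences cancel them: `(j + 1) - j = 1` gives `N ∣ ab` and `N ∣ bc`, so `N ^ 2`
divides `ab * c (j + 2)` and `a j * bc`, whose difference is `2abc`; and the second difference
`j (j - 1) - 2 (j + 1) j + (j + 2) (j + 1) = 2` gives `n ∣ 2abc`.
-/

theorem Nat.descFactorial_dvd_choose_mul_descFactorial (n k r : ℕ) :
    n.descFactorial r ∣ n.choose k * k.descFactorial r := by
  obtain hkr | hrk := lt_or_ge k r
  · simp [Nat.descFactorial_eq_zero_iff_lt.2 hkr]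
  refine ⟨(n - r).choose (k - r), ?_⟩
  rw [Nat.descFactorial_eq_factorial_mul_choose, Nat.descFactorial_eq_factorial_mul_choose,
    mul_left_comm, Nat.choose_mul hrk, mul_assoc]

theorem Nat.sq_dvd_two_mul_of_dvd_mul_consecutive {m x y z i : ℕ} (hx : m ∣ x * i)
    (hy : m ∣ y * (i + 1)) (hz : m ∣ z * (i + 2)) : m ^ 2 ∣ 2 * (x * y * z) := by
  have hxy : m ∣ x * y :=
    (Nat.dvd_add_right (hx.mul_right y)).mp (hy.trans ⟨x, by ring⟩)
  have hyz : m ∣ y * z :=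
    (Nat.dvd_add_right (hy.mul_right z)).mp (hz.trans ⟨y, by ring⟩)
  rw [sq]
  exact (Nat.dvd_add_right (mul_dvd_mul hx hyz)).mp ((mul_dvd_mul hxy hz).trans ⟨1, by ring⟩)

theorem Nat.dvd_two_mul_of_dvd_mul_consecutive_descFactorial_two {m x y z i : ℕ}
    (hx : m ∣ x * i.descFactorial 2) (hy : m ∣ y * (i + 1).descFactorial 2)
    (hz : m ∣ z * (i + 2).descFactorial 2) : m ∣ 2 * (x * y * z) := by
  have second_difference :
      i.descFactorial 2 + (i + 2).descFactorial 2 = 2 * (i + 1).descFactorial 2 + 2 := by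
    cases i <;> simp [Nat.descFactorial_succ]; ring
  generalize i.descFactorial 2 = p, (i + 1).descFactorial 2 = q, (i + 2).descFactorial 2 = r
    at hx hy hz second_difference
  have hpr : m ∣ x * y * z * (p + r) := by
    rw [mul_add]
    exact dvd_add (hx.trans ⟨y * z, by ring⟩) (hz.trans ⟨x * y, by ring⟩)
  rw [second_difference, mul_add, mul_comm _ 2] at hpr
  exact (Nat.dvd_add_right (hy.trans ⟨2 * x * z, by ring⟩)).mp hpr

theorem baxter_summand_integral_general (n k : ℕ) (hk1 : 1 ≤ k) :
    ((n+1).choose 1 * (n+1).choose 2) ∣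
      ((n+1).choose (k-1) * (n+1).choose k * (n+1).choose (k+1)) := by
  obtain ⟨i, rfl⟩ : ∃ i, k = i + 1 := ⟨k - 1, by omega⟩
  rw [Nat.add_sub_cancel, add_assoc]
  have hsucc (j : ℕ) : n + 1 ∣ (n + 1).choose j * j := by
    simpa using Nat.descFactorial_dvd_choose_mul_descFactorial (n + 1) j 1
  have hself (j : ℕ) : n ∣ (n + 1).choose j * j.descFactorial 2 :=
    (dvd_mul_left n (n + 1)).trans <| by
      simpa [Nat.descFactorial_succ, mul_comm] using
        Nat.descFactorial_dvd_choose_mul_descFactorial (n + 1) j 2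
  have hcop : n.Coprime ((n + 1) ^ 2) :=
    (Nat.coprime_self_add_right.mpr (Nat.coprime_one_right n)).pow_right 2
  have hprod : n * (n + 1) ^ 2 ∣ 2 * ((n + 1).choose i * (n + 1).choose (i + 1) *
      (n + 1).choose (i + 2)) :=
    hcop.mul_dvd_of_dvd_of_dvd
      (Nat.dvd_two_mul_of_dvd_mul_consecutive_descFactorial_two
        (hself i) (hself (i + 1)) (hself (i + 2)))
      (Nat.sq_dvd_two_mul_of_dvd_mul_consecutive (hsucc i) (hsucc (i + 1)) (hsucc (i + 2)))
  have hdenom : n * (n + 1) ^ 2 = 2 * ((n + 1).choose 1 * (n + 1).choose 2) := by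
    have h := Nat.add_one_mul_choose_eq n 1
    rw [Nat.choose_one_right] at h ⊢
    linear_combination (n + 1) * h
  rw [hdenom] at hprod
  exact Nat.dvd_of_mul_dvd_mul_left two_pos hprod

/-- Each summand in the definition of the Baxter numbers is a natural number:
for `1 ≤ k ≤ n`, the product `C(n+1,1)·C(n+1,2)` divides
`C(n+1,k-1)·C(n+1,k)·C(n+1,k+1)`. -/
theorem baxter_summand_integral (n k : ℕ) (hn : 1 ≤ n) (hk1 : 1 ≤ k) (hkn : k ≤ n) :
    ((n+1).choose 1 * (n+1).choose 2) ∣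
      ((n+1).choose (k-1) * (n+1).choose k * (n+1).choose (k+1)) :=
  baxter_summand_integral_general n k hk1
end

section
/- The number of sequences (w_1,…,w_n) with each w_j ∈ {+1,−1} such that all partial sums w_1+⋯+w_j ≥ 0 (for 1 ≤ j ≤ n) equals the central binomial coefficient \binom{n}{⌊n/2⌋}. -/
/-!
Count ballot sequences by their number of `-1` steps. Appending `+1` to a ballot sequence keeps
it ballot, and appending `-1` does exactly when the current height `n - 2 * (number of -1s)` is
positive. Hence the number `G n b` of ballot sequences of length `n` with at most `b` steps `-1`
satisfies Pascal's recurrence `G (n+1) (b+1) = G n (b+1) + G n b` as long as `2 * b < n`, and so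
`G n b = n.choose b` for `2 * b ≤ n`; in the boundary case `n = 2 * b + 1` one uses that a ballot
sequence of odd length `2 * b + 1` has at most `b` steps `-1` and that
`(2 * b + 1).choose b = (2 * b + 1).choose (b + 1)`. Finally the last partial sum is nonnegative,
so every ballot sequence of length `n` has at most `n / 2` steps `-1`.
-/

open Finset Fintype

theorem card_filter_piFinset_const_succ {α : Type*} {n : ℕ} (s : Finset α)
    (P : (Fin (n + 1) → α) → Prop) [DecidablePred P] :
    #{v ∈ piFinset fun _ ↦ s | P v} = ∑ a ∈ s, #{w ∈ piFinset fun _ ↦ s | P (Fin.snoc w a)} := by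
  classical
  rw [card_eq_sum_card_fiberwise (f := fun v ↦ v (Fin.last n)) (t := s)
    (fun v hv ↦ mem_piFinset.1 (mem_filter.1 hv).1 _)]
  refine sum_congr rfl fun a _ ↦ card_nbij' Fin.init (Fin.snoc · a) ?_ ?_ ?_ ?_
  all_goals simp only [Set.MapsTo, Set.LeftInvOn, coe_filter, Set.mem_ofPred_eq, mem_filter,
    mem_piFinset]
  · rintro v ⟨⟨hs, hP⟩, rfl⟩
    rw [Fin.snoc_init_self]
    exact ⟨fun i ↦ hs _, hP⟩
  · rintro w ⟨hs, hP⟩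
    refine ⟨⟨Fin.lastCases (by simpa) (by simpa), hP⟩, Fin.snoc_last _ _⟩
  · rintro v ⟨-, rfl⟩
    exact Fin.snoc_init_self v
  · exact fun w _ ↦ Fin.init_snoc _ _

namespace BallotSequence

variable {n : ℕ}

def partialSum (w : Fin n → ℤ) (j : Fin n) : ℤ := ∑ i ∈ univ.filter (· ≤ j), w i

def IsBallot (w : Fin n → ℤ) : Prop := ∀ j, 0 ≤ partialSum w j

instance : DecidablePred (IsBallot (n := n)) := fun _ ↦ Fintype.decidableForallFintype

def signSeqs (n : ℕ) : Finset (Fin n → ℤ) := piFinset fun _ ↦ {1, -1}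

def numNeg (w : Fin n → ℤ) : ℕ := #{i | w i = -1}

def ballotUpTo (n b : ℕ) : Finset (Fin n → ℤ) := {w ∈ signSeqs n | IsBallot w ∧ numNeg w ≤ b}

theorem partialSum_snoc_castSucc (w : Fin n → ℤ) (a : ℤ) (j : Fin n) :
    partialSum (Fin.snoc w a : Fin (n + 1) → ℤ) j.castSucc = partialSum w j := by
  have : (univ.filter (· ≤ j.castSucc) : Finset (Fin (n + 1))) =
      ((univ : Finset (Fin n)).filter (· ≤ j)).map Fin.castSuccEmb := by
    ext i
    induction i using Fin.lastCases with
    | last => simp [(Fin.castSucc_lt_last j).not_ge, Fin.castSucc_ne_last]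
    | cast i => simp
  rw [partialSum, this, sum_map]
  simp [partialSum]

theorem partialSum_last (w : Fin (n + 1) → ℤ) : partialSum w (Fin.last n) = ∑ i, w i := by
  simp [partialSum, Fin.le_last]

theorem IsBallot.sum_nonneg {w : Fin n → ℤ} (h : IsBallot w) : 0 ≤ ∑ i, w i := by
  cases n with
  | zero => simp
  | succ n => exact partialSum_last w ▸ h (Fin.last n)

theorem isBallot_snoc (w : Fin n → ℤ) (a : ℤ) :
    IsBallot (Fin.snoc w a : Fin (n + 1) → ℤ) ↔ IsBallot w ∧ 0 ≤ ∑ i, w i + a := by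
  simp only [IsBallot, Fin.forall_fin_succ', partialSum_snoc_castSucc, partialSum_last,
    Fin.sum_univ_castSucc, Fin.snoc_castSucc, Fin.snoc_last]

theorem numNeg_snoc (w : Fin n → ℤ) (a : ℤ) :
    numNeg (Fin.snoc w a : Fin (n + 1) → ℤ) = numNeg w + if a = -1 then 1 else 0 := by
  simp only [numNeg, card_filter, Fin.sum_univ_castSucc, Fin.snoc_castSucc, Fin.snoc_last]

theorem sum_eq_of_mem_signSeqs {w : Fin n → ℤ} (hw : w ∈ signSeqs n) :
    ∑ i, w i = n - 2 * numNeg w := by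
  have hw' : ∀ i, w i = 1 - 2 * if w i = -1 then 1 else 0 := fun i ↦ by
    rcases (by simpa using mem_piFinset.1 hw i : w i = 1 ∨ w i = -1) with h | h <;> simp [h]
  rw [sum_congr rfl fun i _ ↦ hw' i, sum_sub_distrib, ← mul_sum, numNeg, card_filter]
  simp

theorem two_mul_numNeg_le {w : Fin n → ℤ} (hw : w ∈ signSeqs n) (h : IsBallot w) :
    2 * numNeg w ≤ n := by
  have := h.sum_nonneg
  rw [sum_eq_of_mem_signSeqs hw] at this
  omega

theorem ballotUpTo_eq_of_le {b : ℕ} (h : n ≤ 2 * b + 1) :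
    ballotUpTo n b = {w ∈ signSeqs n | IsBallot w} :=
  filter_congr fun w hw ↦ ⟨And.left, fun hb ↦ ⟨hb, by have := two_mul_numNeg_le hw hb; omega⟩⟩

theorem card_ballotUpTo_succ (n b : ℕ) :
    #(ballotUpTo (n + 1) b) = #(ballotUpTo n b) +
      #{w ∈ signSeqs n | IsBallot w ∧ 2 * numNeg w < n ∧ numNeg w + 1 ≤ b} := by
  rw [ballotUpTo, signSeqs, card_filter_piFinset_const_succ, sum_pair (by decide)]
  congr 1 <;> refine congrArg card (filter_congr fun w hw ↦ ?_) <;>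
    have hsum := sum_eq_of_mem_signSeqs hw <;>
    simp only [isBallot_snoc, numNeg_snoc, Int.reduceNeg, reduceCtorEq, ↓reduceIte, add_zero]
  · exact ⟨fun ⟨⟨hb, _⟩, hneg⟩ ↦ ⟨hb, hneg⟩,
      fun ⟨hb, hneg⟩ ↦ ⟨⟨hb, by linarith [hb.sum_nonneg]⟩, hneg⟩⟩
  · exact ⟨fun ⟨⟨hb, _⟩, hneg⟩ ↦ ⟨hb, by omega, hneg⟩, fun ⟨hb, _, hneg⟩ ↦ ⟨⟨hb, by omega⟩, hneg⟩⟩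

theorem card_ballotUpTo {n b : ℕ} (h : 2 * b ≤ n) : #(ballotUpTo n b) = n.choose b := by
  induction n generalizing b with
  | zero =>
    obtain rfl : b = 0 := by omega
    rfl
  | succ n ih =>
    rw [card_ballotUpTo_succ]
    cases b with
    | zero => simp [ih (b := 0) (Nat.zero_le n)]
    | succ b =>
      have hstep : {w ∈ signSeqs n | IsBallot w ∧ 2 * numNeg w < n ∧ numNeg w + 1 ≤ b + 1} =
          ballotUpTo n b :=
        filter_congr fun w _ ↦ and_congr_right fun _ ↦ by omega
      rw [hstep, ih (b := b) (by omega), Nat.choose_succ_succ', add_comm]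
      rcases (show 2 * (b + 1) ≤ n ∨ n = 2 * b + 1 by omega) with hle | rfl
      · rw [ih hle]
      · rw [ballotUpTo_eq_of_le (by omega), ← ballotUpTo_eq_of_le (b := b) le_rfl, ih (by omega),
          Nat.choose_symm_half]

end BallotSequence

/-- The number of ±1 sequences of length `n` with all partial sums nonnegative
equals the central binomial coefficient `C(n, ⌊n/2⌋)`. -/
theorem card_nonneg_partial_sum_sequences (n : ℕ) :
    Nat.card {w : Fin n → ℤ // (∀ j, w j = 1 ∨ w j = -1) ∧
      ∀ j : Fin n, 0 ≤ ∑ i ∈ Finset.univ.filter (· ≤ j), w i} = n.choose (n / 2) := by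
  have hmem : ∀ w : Fin n → ℤ, ((∀ j, w j = 1 ∨ w j = -1) ∧
      ∀ j : Fin n, 0 ≤ ∑ i ∈ Finset.univ.filter (· ≤ j), w i) ↔
        w ∈ BallotSequence.ballotUpTo n (n / 2) := by
    intro w
    rw [BallotSequence.ballotUpTo_eq_of_le (by omega)]
    simp only [BallotSequence.signSeqs, mem_filter, mem_piFinset, mem_insert, mem_singleton]
    rfl
  rw [Nat.card_congr (Equiv.subtypeEquivRight hmem), Nat.card_eq_fintype_card, Fintype.card_coe,
    BallotSequence.card_ballotUpTo (Nat.mul_div_le n 2)]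
end

section
/- The number of standard Young tableaux of size n with at most 2 rows equals \binom{n}{⌊n/2⌋}. -/
/-!
Count two-row tableaux by the length of their first row. For `n ≤ 2k`, the tableaux of size `n`
whose first row has at least `k` boxes satisfy Pascal's recursion (remove the largest entry,
which ends a row), so there are `C(n, k)` of them; at the boundary `n = 2k + 1` the first row
automatically has more than `k` boxes. Every tableau has a first row of at least `⌈n/2⌉` boxes,
so the total is `C(n, ⌈n/2⌉) = C(n, ⌊n/2⌋)`.
-/

open Finset

lemma Nat.card_subtype_fin_succ {n : ℕ} {α : Type*} [Fintype α] (P : (Fin (n + 1) → α) → Prop) :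
    Nat.card {f // P f} = ∑ a, Nat.card {g : Fin n → α // P (Fin.snoc g a)} := by
  rw [← Nat.card_sigma]
  exact Nat.card_congr <|
    ((Fin.snocEquiv fun _ ↦ α).subtypeEquiv fun _ ↦ Iff.rfl).symm.trans
      (Equiv.subtypeProdEquivSigmaSubtype fun a g ↦ P (Fin.snoc g a))

namespace TwoRowTableau

variable {n : ℕ}

/-- `f i` is the row of the entry `i`. -/
def IsBallot (f : Fin n → Fin 2) : Prop :=
  ∀ j : Fin n, #{i | i ≤ j ∧ f i = 1} ≤ #{i | i ≤ j ∧ f i = 0}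

def rowLength (f : Fin n → Fin 2) (r : Fin 2) : ℕ := #{i | f i = r}

lemma rowLength_zero_add_rowLength_one (f : Fin n → Fin 2) :
    rowLength f 0 + rowLength f 1 = n := by
  have hcompl : univ.filter (fun i ↦ ¬f i = 0) = univ.filter (fun i ↦ f i = 1) :=
    filter_congr fun i _ ↦ by omega
  simpa [rowLength, hcompl] using
    card_filter_add_card_filter_not (s := univ) (fun i : Fin n ↦ f i = 0)

lemma rowLength_snoc (g : Fin n → Fin 2) (a r : Fin 2) :
    rowLength (Fin.snoc g a : Fin (n + 1) → Fin 2) r = rowLength g r + if a = r then 1 else 0 := by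
  simp only [rowLength, card_filter, Fin.sum_univ_castSucc, Fin.snoc_castSucc, Fin.snoc_last]

lemma prefix_card_snoc_castSucc (g : Fin n → Fin 2) (a r : Fin 2) (j : Fin n) :
    #{i | i ≤ j.castSucc ∧ (Fin.snoc g a : Fin (n + 1) → Fin 2) i = r} =
      #{i | i ≤ j ∧ g i = r} := by
  rw [card_filter, card_filter, Fin.sum_univ_castSucc]
  simp [(Fin.castSucc_lt_last j).not_ge]

lemma prefix_card_last (f : Fin (n + 1) → Fin 2) (r : Fin 2) :
    #{i | i ≤ Fin.last n ∧ f i = r} = rowLength f r := by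
  simp [rowLength, Fin.le_last]

lemma isBallot_snoc_iff (g : Fin n → Fin 2) (a : Fin 2) :
    IsBallot (Fin.snoc g a : Fin (n + 1) → Fin 2) ↔
      IsBallot g ∧ rowLength (Fin.snoc g a : Fin (n + 1) → Fin 2) 1 ≤
        rowLength (Fin.snoc g a : Fin (n + 1) → Fin 2) 0 := by
  simp only [IsBallot, Fin.forall_fin_succ', prefix_card_snoc_castSucc, prefix_card_last]

lemma IsBallot.le_two_mul_rowLength_zero {f : Fin n → Fin 2} (hf : IsBallot f) :
    n ≤ 2 * rowLength f 0 := by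
  have hsum := rowLength_zero_add_rowLength_one f
  cases n with
  | zero => omega
  | succ n =>
    have hlast := hf (Fin.last n)
    rw [prefix_card_last, prefix_card_last] at hlast
    omega

abbrev BallotWithFirstRowGE (n k : ℕ) : Type :=
  {f : Fin n → Fin 2 // IsBallot f ∧ k ≤ rowLength f 0}

/-- Pascal's rule: remove the box containing the largest entry. -/
lemma card_ballotWithFirstRowGE_succ_succ {k : ℕ} (h : n + 1 ≤ 2 * (k + 1)) :
    Nat.card (BallotWithFirstRowGE (n + 1) (k + 1)) =
      Nat.card (BallotWithFirstRowGE n k) + Nat.card (BallotWithFirstRowGE n (k + 1)) := by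
  rw [Nat.card_subtype_fin_succ, Fin.sum_univ_two]
  congr 1 <;> refine Nat.card_congr (Equiv.subtypeEquivRight fun g ↦ ?_) <;>
    simp only [isBallot_snoc_iff, rowLength_snoc, Fin.isValue, ↓reduceIte, zero_ne_one,
      one_ne_zero, add_zero, and_assoc] <;>
    exact and_congr_right fun _ ↦ by have := rowLength_zero_add_rowLength_one g; omega

lemma card_ballotWithFirstRowGE_of_odd {k : ℕ} :
    Nat.card (BallotWithFirstRowGE (2 * k + 1) k) =
      Nat.card (BallotWithFirstRowGE (2 * k + 1) (k + 1)) :=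
  Nat.card_congr <| Equiv.subtypeEquivRight fun _ ↦
    ⟨fun ⟨hf, _⟩ ↦ ⟨hf, by have := hf.le_two_mul_rowLength_zero; omega⟩,
      fun ⟨hf, hk⟩ ↦ ⟨hf, by omega⟩⟩

theorem card_ballotWithFirstRowGE {k : ℕ} (h : n ≤ 2 * k) :
    Nat.card (BallotWithFirstRowGE n k) = n.choose k := by
  induction n generalizing k with
  | zero =>
    cases k with
    | zero =>
      exact Nat.card_eq_one_iff_exists.mpr
        ⟨⟨Fin.elim0, fun j ↦ j.elim0, Nat.zero_le _⟩, fun _ ↦ Subtype.ext (funext fun i ↦ i.elim0)⟩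
    | succ k => simp [BallotWithFirstRowGE, rowLength]
  | succ n ih =>
    obtain ⟨k, rfl⟩ : ∃ k', k = k' + 1 := Nat.exists_eq_add_one.mpr (by omega)
    have hk : Nat.card (BallotWithFirstRowGE n k) = n.choose k := by
      rcases le_or_gt n (2 * k) with hn | hn
      · exact ih hn
      · obtain rfl : n = 2 * k + 1 := by omega
        rw [card_ballotWithFirstRowGE_of_odd, ih (by omega), Nat.choose_symm_half]
    rw [card_ballotWithFirstRowGE_succ_succ h, hk, ih (by omega), Nat.choose_succ_succ]

end TwoRowTableau

open TwoRowTableau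

/-- The number of standard Young tableaux of size `n` with at most 2 rows
(encoded as lattice words / ballot sequences: `f j` is the row containing
entry `j`, and every prefix has at least as many first-row entries as
second-row entries) equals `C(n, ⌊n/2⌋)`. -/
theorem card_syt_two_rows (n : ℕ) :
    Nat.card {f : Fin n → Fin 2 // ∀ j : Fin n,
      (Finset.univ.filter (fun i => i ≤ j ∧ f i = 1)).card ≤
        (Finset.univ.filter (fun i => i ≤ j ∧ f i = (0 : Fin 2))).card}
      = n.choose (n / 2) := by
  have hall : {f : Fin n → Fin 2 // IsBallot f} ≃ BallotWithFirstRowGE n ((n + 1) / 2) :=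
    Equiv.subtypeEquivRight fun f ↦
      ⟨fun hf ↦ ⟨hf, by have := hf.le_two_mul_rowLength_zero; omega⟩, And.left⟩
  calc _ = Nat.card (BallotWithFirstRowGE n ((n + 1) / 2)) := Nat.card_congr hall
    _ = n.choose ((n + 1) / 2) := card_ballotWithFirstRowGE (by omega)
    _ = n.choose (n / 2) := Nat.choose_symm_of_eq_add (by omega)
end

section
/- The number of set partitions of {1,…,n} with no enhanced 2-nesting (i.e., whose arc diagram has no two arcs (i_1,j_1),(i_2,j_2) with i_1 < i_2 ≤ j_2 < j_1) equals the Motzkin number M_n. -/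
/-!
Record for each vertex whether it is a left endpoint and whether it is a right endpoint of an
arc. Since no two arcs nest, arcs are ordered alike by their left and by their right endpoints,
so the `k`-th left endpoint is joined to the `k`-th right endpoint and the diagram is recovered
from this word. Reading left endpoints as up steps, right endpoints as down steps and the other
two letters as level steps, the words that arise are exactly the Motzkin paths in which a
singleton may only occur at height `0` and a vertex that is both a left and a right endpoint
only at positive height; each Motzkin path is read in exactly one such way. Counting these
paths from an arbitrary height `h` and cutting at the first descent below `h` gives the
convolution identity behind the Motzkin recurrence.
-/

open Finset

def shiftConv {R : Type*} [CommSemiring R] (f g : ℕ → R) (n : ℕ) : R :=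
  ∑ k ∈ range n, f k * g (n - 1 - k)

section ShiftConv
variable {R : Type*} [CommSemiring R]

lemma mk_shiftConv (f g : ℕ → R) :
    PowerSeries.mk (shiftConv f g) = .X * .mk f * .mk g := by
  ext (_ | n)
  · simp [shiftConv]
  · rw [mul_assoc, PowerSeries.coeff_succ_X_mul, PowerSeries.coeff_mul, PowerSeries.coeff_mk,
      shiftConv, Nat.sum_antidiagonal_eq_sum_range_succ
        (fun i j => PowerSeries.coeff i (.mk f) * PowerSeries.coeff j (.mk g))]
    simp

lemma shiftConv_assoc (f g k : ℕ → R) :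
    shiftConv (shiftConv f g) k = shiftConv f (shiftConv g k) := by
  have h : PowerSeries.mk (shiftConv (shiftConv f g) k) = .mk (shiftConv f (shiftConv g k)) := by
    simp only [mk_shiftConv]
    ring
  funext n
  simpa using congrArg (PowerSeries.coeff n) h

lemma shiftConv_congr {f f' g g' : ℕ → R} {n : ℕ} (hf : ∀ k < n, f k = f' k)
    (hg : ∀ k < n, g k = g' k) : shiftConv f g n = shiftConv f' g' n :=
  sum_congr rfl fun k hk => by
    rw [mem_range] at hk
    rw [hf k hk, hg (n - 1 - k) (by omega)]

lemma shiftConv_succ (f g : ℕ → R) (n : ℕ) :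
    shiftConv f g (n + 1) = f 0 * g n + shiftConv (fun k => f (k + 1)) g n := by
  rw [shiftConv, sum_range_succ', add_comm, shiftConv]
  simp only [Nat.add_sub_cancel, Nat.sub_zero]
  congr 1
  refine sum_congr rfl fun k hk => ?_
  congr 2
  omega

end ShiftConv

/-- The number of Motzkin paths with `n` steps from height `h` down to height `0`. -/
def motzkinFrom : ℕ → ℕ → ℕ
  | 0, 0 => 1
  | _ + 1, 0 => 0
  | 0, n + 1 => motzkinFrom 1 n + motzkinFrom 0 n
  | h + 1, n + 1 => motzkinFrom (h + 2) n + motzkinFrom (h + 1) n + motzkinFrom h n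

lemma motzkinFrom_succ (h n : ℕ) :
    motzkinFrom (h + 1) n = shiftConv (motzkinFrom 0) (motzkinFrom h) n := by
  induction n using Nat.strong_induction_on generalizing h with
  | _ n ih =>
  rcases n with _ | n
  · rfl
  have ih' : ∀ h, ∀ k < n,
      motzkinFrom (h + 1) k = shiftConv (motzkinFrom 0) (motzkinFrom h) k :=
    fun h k hk => ih k (by omega) h
  calc motzkinFrom (h + 1) (n + 1)
      = shiftConv (motzkinFrom 0) (motzkinFrom (h + 1)) n
        + motzkinFrom (h + 1) n + motzkinFrom h n := by
        rw [← ih n (by omega)]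
        rfl
    _ = shiftConv (motzkinFrom 1) (motzkinFrom h) n
        + shiftConv (motzkinFrom 0) (motzkinFrom h) n + motzkinFrom h n := by
        rw [ih n (by omega), shiftConv_congr (fun _ _ => rfl) (ih' h), ← shiftConv_assoc,
          shiftConv_congr (fun k hk => (ih' 0 k hk).symm) (fun _ _ => rfl)]
    _ = shiftConv (motzkinFrom 0) (motzkinFrom h) (n + 1) := by
        rw [shiftConv_succ, shiftConv, shiftConv, shiftConv, ← sum_add_distrib]
        simp only [motzkinFrom, ← add_mul]
        ring

lemma eq_motzkinFrom_zero (M : ℕ → ℕ) (hM0 : M 0 = 1)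
    (hMrec : ∀ n, M (n + 1) = M n + ∑ k ∈ range n, M k * M (n - 1 - k)) (n : ℕ) :
    M n = motzkinFrom 0 n := by
  induction n using Nat.strong_induction_on with
  | _ n ih =>
  rcases n with _ | n
  · exact hM0
  have ih' : ∀ k < n, M k = motzkinFrom 0 k := fun k hk => ih k (by omega)
  rw [hMrec, ← shiftConv, shiftConv_congr ih' ih', ih n (by omega), motzkinFrom,
    motzkinFrom_succ, add_comm]

section Rank
variable {α : Type*} [LinearOrder α]

def rank (S : Finset α) (v : α) : ℕ := #{x ∈ S | x < v}

variable {S : Finset α} {v w : α}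

lemma rank_mono (S : Finset α) : Monotone (rank S) := fun _ _ hvw =>
  card_le_card <| monotone_filter_right S fun _ _ hx => hx.trans_le hvw

lemma rank_lt_rank (hv : v ∈ S) (hvw : v < w) : rank S v < rank S w :=
  card_lt_card <| (ssubset_iff_of_subset <| monotone_filter_right S fun _ _ hx => hx.trans hvw).2
    ⟨v, by simp [hv, hvw], by simp⟩

lemma rank_injOn (S : Finset α) : Set.InjOn (rank S) S := fun v hv w hw hvw => by
  by_contra hne
  rcases lt_or_gt_of_ne hne with h | h
  · exact (rank_lt_rank hv h).ne hvw
  · exact (rank_lt_rank hw h).ne' hvw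

lemma rank_lt_card (hv : v ∈ S) : rank S v < #S :=
  card_lt_card <| (ssubset_iff_of_subset <| filter_subset _ S).2 ⟨v, hv, by simp⟩

lemma exists_rank_eq {m : ℕ} (hm : m < #S) : ∃ v ∈ S, rank S v = m := by
  obtain ⟨v, hv, hvm⟩ := surj_on_of_inj_on_of_card_le (t := range #S) (fun v _ => rank S v)
    (fun v hv => mem_range.2 (rank_lt_card hv)) (fun _ _ hv hw => rank_injOn S hv hw)
    (by simp) m (mem_range.2 hm)
  exact ⟨v, hv, hvm.symm⟩

lemma rank_image_of_injOn {β : Type*} {f : β → α} {s : Finset β} (hf : Set.InjOn f s)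
    (v : α) :
    rank (s.image f) v = #{x ∈ s | f x < v} := by
  rw [rank, filter_image, card_image_of_injOn (hf.mono (coe_subset.2 (filter_subset _ _)))]

end Rank

section FinCons
variable {n : ℕ} {α : Type*}

lemma rank_zero (S : Finset (Fin (n + 1))) : rank S 0 = 0 := by
  simp [rank]

lemma rank_filter_cons_succ (p : α → Bool) (s : α) (t : Fin n → α) (w : Fin n) :
    rank {v | p (Fin.cons (α := fun _ => α) s t v)} w.succ =
      (p s).toNat + rank {v | p (t v)} w := by
  simp only [rank, filter_filter]
  rw [Fin.card_filter_univ_succ']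
  simp [Fin.succ_pos, Bool.toNat]

lemma card_filter_cons (p : α → Bool) (s : α) (t : Fin n → α) :
    #{v | p (Fin.cons (α := fun _ => α) s t v)} = (p s).toNat + #{v | p (t v)} := by
  rw [Fin.card_filter_univ_succ']
  simp [Bool.toNat]

lemma Nat.card_subtype_fin_cons [Fintype α] (P : (Fin (n + 1) → α) → Prop) :
    Nat.card {t // P t} = ∑ s : α, Nat.card {t : Fin n → α // P (Fin.cons s t)} :=
  calc Nat.card {t // P t} = Nat.card {p : α × (Fin n → α) // P (Fin.cons p.1 p.2)} :=
        (Nat.card_congr ((Fin.consEquiv fun _ => α).subtypeEquiv fun _ => Iff.rfl)).symm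
    _ = _ := by
      rw [Nat.card_congr (Equiv.subtypeProdEquivSigmaSubtype fun s t => P (Fin.cons s t)),
        Nat.card_sigma]

end FinCons

section Words
variable {n : ℕ}

def openers (t : Fin n → Bool × Bool) : Finset (Fin n) := {v | (t v).1}

def closers (t : Fin n → Bool × Bool) : Finset (Fin n) := {v | (t v).2}

/-- `(t v).1` says that `v` opens an arc, `(t v).2` that it closes one, and `h` is the number
of arcs already open before the first vertex. A closing vertex needs an open arc, and a vertex
that neither opens nor closes (a singleton) must not lie under any open arc. -/
def IsMotzkinFrom (h : ℕ) (t : Fin n → Bool × Bool) : Prop :=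
  (∀ v, (t v).2 → rank (closers t) v < h + rank (openers t) v) ∧
  (∀ v, t v = (false, false) → h + rank (openers t) v = rank (closers t) v) ∧
  h + #(openers t) = #(closers t)

lemma isMotzkinFrom_fin_zero_iff {h : ℕ} (t : Fin 0 → Bool × Bool) :
    IsMotzkinFrom h t ↔ h = 0 := by
  simp [IsMotzkinFrom, openers, closers]

lemma isMotzkinFrom_cons {h : ℕ} (s : Bool × Bool) (t : Fin n → Bool × Bool) :
    IsMotzkinFrom h (Fin.cons s t) ↔
      (s.2 → 0 < h) ∧ (s = (false, false) → h = 0) ∧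
        IsMotzkinFrom (h + s.1.toNat - s.2.toNat) t := by
  unfold IsMotzkinFrom openers closers
  rw [Fin.forall_fin_succ, Fin.forall_fin_succ]
  simp only [Fin.cons_zero, Fin.cons_succ, rank_zero,
    rank_filter_cons_succ Prod.fst, rank_filter_cons_succ Prod.snd,
    card_filter_cons Prod.fst, card_filter_cons Prod.snd]
  rcases s with ⟨_ | _, _ | _⟩ <;> grind

lemma card_isMotzkinFrom (h n : ℕ) :
    Nat.card {t : Fin n → Bool × Bool // IsMotzkinFrom h t} = motzkinFrom h n := by
  induction n generalizing h with
  | zero =>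
    simp only [isMotzkinFrom_fin_zero_iff]
    rcases h with _ | h <;> simp [motzkinFrom]
  | succ n ih =>
    simp only [Nat.card_subtype_fin_cons, isMotzkinFrom_cons, Fintype.sum_prod_type]
    rcases h with _ | h
    · simp [motzkinFrom, ih]
    · simp [motzkinFrom, ih]
      ring

end Words

section Diagrams
variable {n : ℕ}

structure IsEnhancedNonnesting (D : Finset (Fin n × Fin n)) : Prop where
  fst_lt_snd : ∀ a ∈ D, a.1 < a.2
  left_unique : ∀ i j j' : Fin n, (i, j) ∈ D → (i, j') ∈ D → j = j'
  right_unique : ∀ i i' j : Fin n, (i, j) ∈ D → (i', j) ∈ D → i = i'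
  not_nested : ¬ ∃ i₁ j₁ i₂ j₂ : Fin n, (i₁, j₁) ∈ D ∧ (i₂, j₂) ∈ D ∧ i₁ < i₂ ∧ j₂ < j₁
  not_singleton_under : ¬ ∃ i₁ j₁ c : Fin n, (i₁, j₁) ∈ D ∧ i₁ < c ∧ c < j₁ ∧
    ∀ x : Fin n, (x, c) ∉ D ∧ (c, x) ∉ D

def wordOfDiagram (D : Finset (Fin n × Fin n)) (v : Fin n) : Bool × Bool :=
  (v ∈ D.image Prod.fst, v ∈ D.image Prod.snd)

def diagramOfWord (t : Fin n → Bool × Bool) : Finset (Fin n × Fin n) :=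
  {p | p.1 ∈ openers t ∧ p.2 ∈ closers t ∧ rank (openers t) p.1 = rank (closers t) p.2}

lemma openers_wordOfDiagram (D : Finset (Fin n × Fin n)) :
    openers (wordOfDiagram D) = D.image Prod.fst := by
  ext
  simp [openers, wordOfDiagram]

lemma closers_wordOfDiagram (D : Finset (Fin n × Fin n)) :
    closers (wordOfDiagram D) = D.image Prod.snd := by
  ext
  simp [closers, wordOfDiagram]

lemma mem_diagramOfWord {t : Fin n → Bool × Bool} {p : Fin n × Fin n} :
    p ∈ diagramOfWord t ↔
      p.1 ∈ openers t ∧ p.2 ∈ closers t ∧ rank (openers t) p.1 = rank (closers t) p.2 := by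
  simp [diagramOfWord]

namespace IsEnhancedNonnesting
variable {D : Finset (Fin n × Fin n)}

lemma injOn_fst (hD : IsEnhancedNonnesting D) : Set.InjOn Prod.fst (D : Set (Fin n × Fin n)) :=
  fun p hp q hq hpq => Prod.ext hpq (hD.left_unique p.1 p.2 q.2 hp (hpq ▸ hq))

lemma injOn_snd (hD : IsEnhancedNonnesting D) : Set.InjOn Prod.snd (D : Set (Fin n × Fin n)) :=
  fun p hp q hq hpq => Prod.ext (hD.right_unique p.1 q.1 p.2 hp (hpq ▸ hq)) hpq

lemma card_image_fst (hD : IsEnhancedNonnesting D) :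
    #(D.image Prod.fst) = #(D.image Prod.snd) := by
  rw [card_image_of_injOn hD.injOn_fst, card_image_of_injOn hD.injOn_snd]

lemma fst_lt_fst_iff (hD : IsEnhancedNonnesting D) {p q : Fin n × Fin n} (hp : p ∈ D)
    (hq : q ∈ D) : p.1 < q.1 ↔ p.2 < q.2 := by
  refine ⟨fun h1 => lt_of_not_ge fun h2 => ?_, fun h2 => lt_of_not_ge fun h1 => ?_⟩
  · rcases h2.eq_or_lt with h2 | h2
    · exact h1.ne (hD.right_unique p.1 q.1 p.2 hp (h2 ▸ hq))
    · exact hD.not_nested ⟨p.1, p.2, q.1, q.2, hp, hq, h1, h2⟩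
  · rcases h1.eq_or_lt with h1 | h1
    · exact h2.ne (hD.left_unique p.1 p.2 q.2 hp (h1 ▸ hq))
    · exact hD.not_nested ⟨q.1, q.2, p.1, p.2, hq, hp, h1, h2⟩

lemma rank_fst_eq_rank_snd (hD : IsEnhancedNonnesting D) {p : Fin n × Fin n} (hp : p ∈ D) :
    rank (D.image Prod.fst) p.1 = rank (D.image Prod.snd) p.2 := by
  rw [rank_image_of_injOn hD.injOn_fst, rank_image_of_injOn hD.injOn_snd]
  exact congrArg card (filter_congr fun q hq => hD.fst_lt_fst_iff hq hp)

lemma rank_fst_eq_rank_snd_of_isolated (hD : IsEnhancedNonnesting D) {v : Fin n}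
    (hv₁ : v ∉ D.image Prod.fst) (hv₂ : v ∉ D.image Prod.snd) :
    rank (D.image Prod.fst) v = rank (D.image Prod.snd) v := by
  rw [rank_image_of_injOn hD.injOn_fst, rank_image_of_injOn hD.injOn_snd]
  refine congrArg card (filter_congr fun p hp => ⟨fun h1 => lt_of_not_ge fun h2 => ?_,
    fun h2 => (hD.fst_lt_snd p hp).trans h2⟩)
  refine hD.not_singleton_under ⟨p.1, p.2, v, hp, h1, h2.lt_of_ne ?_, fun x => ⟨?_, ?_⟩⟩
  · rintro rfl
    exact hv₂ (mem_image_of_mem _ hp)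
  · exact fun hx => hv₂ (mem_image_of_mem Prod.snd hx)
  · exact fun hx => hv₁ (mem_image_of_mem Prod.fst hx)

lemma isMotzkinFrom_wordOfDiagram (hD : IsEnhancedNonnesting D) :
    IsMotzkinFrom 0 (wordOfDiagram D) := by
  simp only [IsMotzkinFrom, openers_wordOfDiagram, closers_wordOfDiagram, zero_add]
  refine ⟨fun v hv => ?_, fun v hv => ?_, hD.card_image_fst⟩
  · obtain ⟨i, hiv⟩ : ∃ i, (i, v) ∈ D := by simpa [wordOfDiagram] using hv
    rw [← hD.rank_fst_eq_rank_snd hiv]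
    exact rank_lt_rank (mem_image_of_mem _ hiv) (hD.fst_lt_snd _ hiv)
  · simp only [wordOfDiagram, Prod.mk.injEq, decide_eq_false_iff_not] at hv
    exact hD.rank_fst_eq_rank_snd_of_isolated hv.1 hv.2

lemma diagramOfWord_wordOfDiagram (hD : IsEnhancedNonnesting D) :
    diagramOfWord (wordOfDiagram D) = D := by
  ext ⟨i, j⟩
  simp only [mem_diagramOfWord, openers_wordOfDiagram, closers_wordOfDiagram]
  refine ⟨fun ⟨hi, hj, hij⟩ => ?_,
    fun hij => ⟨mem_image_of_mem _ hij, mem_image_of_mem _ hij, hD.rank_fst_eq_rank_snd hij⟩⟩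
  obtain ⟨⟨i', j'⟩, hij', rfl⟩ := mem_image.1 hi
  have hj' : j' = j := rank_injOn _ (mem_image_of_mem Prod.snd hij') hj
    ((hD.rank_fst_eq_rank_snd hij').symm.trans hij)
  exact hj' ▸ hij'

end IsEnhancedNonnesting

namespace IsMotzkinFrom
variable {t : Fin n → Bool × Bool}

lemma card_openers (ht : IsMotzkinFrom 0 t) : #(openers t) = #(closers t) := by
  simpa using ht.2.2

lemma exists_closer (ht : IsMotzkinFrom 0 t) {i : Fin n} (hi : i ∈ openers t) :
    ∃ j ∈ closers t, rank (closers t) j = rank (openers t) i :=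
  exists_rank_eq (ht.card_openers ▸ rank_lt_card hi)

lemma exists_opener (ht : IsMotzkinFrom 0 t) {j : Fin n} (hj : j ∈ closers t) :
    ∃ i ∈ openers t, rank (openers t) i = rank (closers t) j :=
  exists_rank_eq (ht.card_openers ▸ rank_lt_card hj)

lemma image_fst_diagramOfWord (ht : IsMotzkinFrom 0 t) :
    (diagramOfWord t).image Prod.fst = openers t := by
  ext i
  simp only [mem_image, mem_diagramOfWord, Prod.exists, exists_and_right, exists_eq_right]
  refine ⟨fun ⟨_, hi, _⟩ => hi, fun hi => ?_⟩
  obtain ⟨j, hj, hij⟩ := ht.exists_closer hi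
  exact ⟨j, hi, hj, hij.symm⟩

lemma image_snd_diagramOfWord (ht : IsMotzkinFrom 0 t) :
    (diagramOfWord t).image Prod.snd = closers t := by
  ext j
  simp only [mem_image, mem_diagramOfWord, Prod.exists, exists_eq_right]
  refine ⟨fun ⟨_, _, hj, _⟩ => hj, fun hj => ?_⟩
  obtain ⟨i, hi, hij⟩ := ht.exists_opener hj
  exact ⟨i, hi, hj, hij⟩

lemma wordOfDiagram_diagramOfWord (ht : IsMotzkinFrom 0 t) :
    wordOfDiagram (diagramOfWord t) = t := by
  funext v
  simp [wordOfDiagram, ht.image_fst_diagramOfWord, ht.image_snd_diagramOfWord, openers, closers]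

lemma isEnhancedNonnesting_diagramOfWord (ht : IsMotzkinFrom 0 t) :
    IsEnhancedNonnesting (diagramOfWord t) := by
  refine ⟨fun p hp => ?_, fun i j j' hj hj' => ?_, fun i i' j hi hi' => ?_, ?_, ?_⟩
  · obtain ⟨-, hj, hij⟩ := mem_diagramOfWord.1 hp
    by_contra! hji
    have := ht.1 p.2 (by simpa [closers] using hj)
    have := rank_mono (openers t) hji
    omega
  · rw [mem_diagramOfWord] at hj hj'
    exact rank_injOn _ hj.2.1 hj'.2.1 (hj.2.2.symm.trans hj'.2.2)
  · rw [mem_diagramOfWord] at hi hi'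
    exact rank_injOn _ hi.1 hi'.1 (hi.2.2.trans hi'.2.2.symm)
  · rintro ⟨i₁, j₁, i₂, j₂, h₁, h₂, hi, hj⟩
    simp only [mem_diagramOfWord] at h₁ h₂
    have := rank_lt_rank h₁.1 hi
    have := rank_lt_rank h₂.2.1 hj
    omega
  · rintro ⟨i, j, c, hij, hic, hcj, hc⟩
    have hco : c ∉ openers t := by
      simpa [← ht.image_fst_diagramOfWord] using fun x => (hc x).2
    have hcc : c ∉ closers t := by
      simpa [← ht.image_snd_diagramOfWord] using fun x => (hc x).1
    have := ht.2.1 c (by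
      simp only [openers, closers, mem_filter, mem_univ, true_and, Bool.not_eq_true] at hco hcc
      exact Prod.ext hco hcc)
    simp only [mem_diagramOfWord] at hij
    have := rank_lt_rank hij.1 hic
    have := rank_mono (closers t) hcj.le
    omega

end IsMotzkinFrom

def diagramEquivWord (n : ℕ) :
    {D : Finset (Fin n × Fin n) // IsEnhancedNonnesting D} ≃
      {t : Fin n → Bool × Bool // IsMotzkinFrom 0 t} where
  toFun D := ⟨wordOfDiagram D.1, D.2.isMotzkinFrom_wordOfDiagram⟩
  invFun t := ⟨diagramOfWord t.1, t.2.isEnhancedNonnesting_diagramOfWord⟩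
  left_inv D := Subtype.ext D.2.diagramOfWord_wordOfDiagram
  right_inv t := Subtype.ext t.2.wordOfDiagram_diagramOfWord

end Diagrams

/-- Set partitions of `{1,…,n}`, given via their arc diagrams (a set `D` of arcs
`(i,j)` with `i < j`, each vertex being the left endpoint of at most one arc and
the right endpoint of at most one arc), with no enhanced 2-nesting — no pair of
arcs `(i₁,j₁)`, `(i₂,j₂)` with `i₁ < i₂ ≤ j₂ < j₁`, and no fixed point strictly
under an arc — are counted by the Motzkin numbers. -/
theorem partitions_no_enhanced_two_nesting_motzkin
    (M : ℕ → ℕ) (hM0 : M 0 = 1)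
    (hMrec : ∀ n, M (n+1) = M n + ∑ k ∈ Finset.range n, M k * M (n-1-k))
    (n : ℕ) :
    Nat.card {D : Finset (Fin n × Fin n) //
      (∀ a ∈ D, a.1 < a.2) ∧
      (∀ i j j' : Fin n, (i, j) ∈ D → (i, j') ∈ D → j = j') ∧
      (∀ i i' j : Fin n, (i, j) ∈ D → (i', j) ∈ D → i = i') ∧
      (¬ ∃ i₁ j₁ i₂ j₂ : Fin n, (i₁, j₁) ∈ D ∧ (i₂, j₂) ∈ D ∧
        i₁ < i₂ ∧ j₂ < j₁) ∧
      (¬ ∃ i₁ j₁ c : Fin n, (i₁, j₁) ∈ D ∧ i₁ < c ∧ c < j₁ ∧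
        ∀ x : Fin n, (x, c) ∉ D ∧ (c, x) ∉ D)} = M n := by
  calc _ = Nat.card {D : Finset (Fin n × Fin n) // IsEnhancedNonnesting D} :=
        Nat.card_congr <| Equiv.subtypeEquivRight fun _ =>
          ⟨fun ⟨h₁, h₂, h₃, h₄, h₅⟩ => ⟨h₁, h₂, h₃, h₄, h₅⟩,
            fun ⟨h₁, h₂, h₃, h₄, h₅⟩ => ⟨h₁, h₂, h₃, h₄, h₅⟩⟩
    _ = Nat.card {t : Fin n → Bool × Bool // IsMotzkinFrom 0 t} :=
        Nat.card_congr (diagramEquivWord n)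
    _ = motzkinFrom 0 n := card_isMotzkinFrom 0 n
    _ = M n := (eq_motzkinFrom_zero M hM0 hMrec n).symm
end

section
/- For exponential generating functions: the generating function counting standard Young tableaux of height at most 2 is \tilde{Y}_2(t) = b_0(t) + b_1(t), where b_j(t) = \sum_{n ≥ 0} t^{2n+j} / (n!(n+j)!) is the modified Bessel function coefficient series; i.e., the number of SYT of size n with at most 2 rows is n! · [t^n](b_0(t) + b_1(t)). -/
/-!
A two-row standard Young tableau is a ballot word in the letters 0 and 1. A ballot word of
length `n` has at most `n / 2` ones, and appending a 1 to a ballot word keeps it ballot exactly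
when fewer than half of its letters are ones. Hence, for `2 m ≤ n`, the ballot words with at most
`m` ones satisfy Pascal's recurrence in `(n, m)`, so there are `C(n, m)` of them, and
`C(n, ⌊n/2⌋)` ballot words in all. On the generating-function side, `n! [tⁿ] (b₀ + b₁)` is
`n! / (⌊n/2⌋! ⌈n/2⌉!)`, the same binomial coefficient.
-/

/-- The coefficient series of the modified Bessel function:
`b_j(t) = ∑_{n ≥ 0} t^{2n+j} / (n!(n+j)!)`. -/
noncomputable def besselSeries (j : ℕ) : PowerSeries ℚ :=
  PowerSeries.mk fun N =>
    if j ≤ N ∧ (N - j) % 2 = 0 then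
      1 / ((Nat.factorial ((N - j) / 2) : ℚ) * (Nat.factorial ((N - j) / 2 + j) : ℚ))
    else 0

open Finset

theorem Fin.card_filter_univ_castSucc {n : ℕ} (p : Fin (n + 1) → Prop) [DecidablePred p] :
    #{x | p x} = #{x : Fin n | p x.castSucc} + if p (Fin.last n) then 1 else 0 := by
  rw [Fin.univ_castSuccEmb, filter_cons, apply_ite Finset.card, card_cons, filter_map, card_map]
  split_ifs <;> rfl

theorem Fin.card_filter_snoc {α : Type*} [Fintype α] {n : ℕ}
    (P : (Fin (n + 1) → α) → Prop) [DecidablePred P] :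
    #{f | P f} = ∑ x, #{g : Fin n → α | P (Fin.snoc g x)} := by
  simp only [card_filter]
  rw [← (Fin.snocEquiv fun _ => α).sum_comp, Fintype.sum_prod_type]
  rfl

namespace BallotWord

variable {n : ℕ}

def prefixCount (f : Fin n → Fin 2) (v : Fin 2) (j : Fin n) : ℕ := #{i | i ≤ j ∧ f i = v}

def letterCount (f : Fin n → Fin 2) (v : Fin 2) : ℕ := #{i | f i = v}

def IsBallot (f : Fin n → Fin 2) : Prop := ∀ j, prefixCount f 1 j ≤ prefixCount f 0 j

instance : DecidablePred (IsBallot (n := n)) := fun _ => Fintype.decidableForallFintype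

lemma prefixCount_snoc_castSucc (g : Fin n → Fin 2) (x v : Fin 2) (j : Fin n) :
    prefixCount (Fin.snoc g x) v j.castSucc = prefixCount g v j := by
  simp [prefixCount, Fin.card_filter_univ_castSucc, (Fin.castSucc_lt_last j).not_ge]

lemma prefixCount_last (f : Fin (n + 1) → Fin 2) (v : Fin 2) :
    prefixCount f v (Fin.last n) = letterCount f v := by
  simp [prefixCount, letterCount, Fin.le_last]

lemma letterCount_snoc (g : Fin n → Fin 2) (x v : Fin 2) :
    letterCount (Fin.snoc g x) v = letterCount g v + if x = v then 1 else 0 := by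
  simp [letterCount, Fin.card_filter_univ_castSucc]

lemma letterCount_zero_add_letterCount_one (f : Fin n → Fin 2) :
    letterCount f 0 + letterCount f 1 = n := by
  have h : ∀ a : Fin 2, ¬ a = 0 ↔ a = 1 := by decide
  rw [letterCount, letterCount, ← filter_congr (fun i _ => h (f i)),
    card_filter_add_card_filter_not, card_univ, Fintype.card_fin]

lemma isBallot_snoc {g : Fin n → Fin 2} {x : Fin 2} :
    IsBallot (Fin.snoc g x) ↔
      IsBallot g ∧ letterCount (Fin.snoc g x) 1 ≤ letterCount (Fin.snoc g x) 0 := by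
  simp only [IsBallot, Fin.forall_fin_succ', prefixCount_snoc_castSucc, prefixCount_last]

lemma IsBallot.two_mul_letterCount_one_le {f : Fin n → Fin 2} (hf : IsBallot f) :
    2 * letterCount f 1 ≤ n := by
  have := letterCount_zero_add_letterCount_one f
  cases n with
  | zero => omega
  | succ n =>
    have := hf (Fin.last n)
    rw [prefixCount_last, prefixCount_last] at this
    omega

lemma isBallot_snoc_zero {g : Fin n → Fin 2} : IsBallot (Fin.snoc g 0) ↔ IsBallot g := by
  simp only [isBallot_snoc, letterCount_snoc, and_iff_left_iff_imp]
  intro hg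
  have := hg.two_mul_letterCount_one_le
  have := letterCount_zero_add_letterCount_one g
  simp only [zero_ne_one, ↓reduceIte, add_zero]
  omega

lemma isBallot_snoc_one {g : Fin n → Fin 2} :
    IsBallot (Fin.snoc g 1) ↔ IsBallot g ∧ 2 * letterCount g 1 < n := by
  have := letterCount_zero_add_letterCount_one g
  simp only [isBallot_snoc, letterCount_snoc, ↓reduceIte, one_ne_zero, add_zero]
  exact and_congr_right fun _ => by omega

def ballotCount (n m : ℕ) : ℕ := #{f : Fin n → Fin 2 | IsBallot f ∧ letterCount f 1 ≤ m}

lemma ballotCount_succ (n m : ℕ) :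
    ballotCount (n + 1) m = ballotCount n m +
      #{g : Fin n → Fin 2 | IsBallot g ∧ 2 * letterCount g 1 < n ∧ letterCount g 1 < m} := by
  rw [ballotCount, Fin.card_filter_snoc, Fin.sum_univ_two]
  congr 1 <;> congr 1 <;> refine filter_congr fun g _ => ?_
  · simp [isBallot_snoc_zero, letterCount_snoc]
  · simp only [isBallot_snoc_one, letterCount_snoc, if_true, and_assoc, Nat.add_one_le_iff]

lemma ballotCount_zero_zero : ballotCount 0 0 = 1 := by decide

lemma ballotCount_succ_zero (n : ℕ) : ballotCount (n + 1) 0 = ballotCount n 0 := by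
  simp [ballotCount_succ]

lemma ballotCount_succ_succ {n m : ℕ} (h : 2 * m < n) :
    ballotCount (n + 1) (m + 1) = ballotCount n (m + 1) + ballotCount n m := by
  rw [ballotCount_succ, ballotCount]
  congr 2
  exact filter_congr fun g _ => and_congr_right fun _ => by omega

lemma ballotCount_of_div_two_le {n m : ℕ} (h : n / 2 ≤ m) :
    ballotCount n m = #{f : Fin n → Fin 2 | IsBallot f} :=
  congrArg card <| filter_congr fun _ _ =>
    and_iff_left_of_imp fun hf => by have := hf.two_mul_letterCount_one_le; omega

theorem ballotCount_eq_choose {n m : ℕ} (h : 2 * m ≤ n) : ballotCount n m = n.choose m := by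
  induction n generalizing m with
  | zero =>
    obtain rfl : m = 0 := by omega
    exact ballotCount_zero_zero
  | succ n ih =>
    cases m with
    | zero => simpa [ballotCount_succ_zero] using ih (by omega : 2 * 0 ≤ n)
    | succ m =>
      rw [ballotCount_succ_succ (by omega), Nat.choose_succ_succ', add_comm (n.choose m),
        ih (by omega : 2 * m ≤ n)]
      rcases (by omega : 2 * (m + 1) ≤ n ∨ n = 2 * m + 1) with h' | rfl
      · rw [ih h']
      -- no ballot word of length `2 m + 1` has `m + 1` ones
      · rw [ballotCount_of_div_two_le (by omega : (2 * m + 1) / 2 ≤ m + 1),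
          ← ballotCount_of_div_two_le (by omega : (2 * m + 1) / 2 ≤ m), ih (by omega),
          Nat.choose_symm_half]

theorem card_isBallot (n : ℕ) : #{f : Fin n → Fin 2 | IsBallot f} = n.choose (n / 2) := by
  rw [← ballotCount_of_div_two_le le_rfl, ballotCount_eq_choose (by omega)]

end BallotWord

lemma coeff_besselSeries_of_odd {j N : ℕ} (h : (N + j) % 2 = 1) :
    PowerSeries.coeff N (besselSeries j) = 0 := by
  rw [besselSeries, PowerSeries.coeff_mk, if_neg (by omega)]

lemma factorial_mul_coeff_besselSeries (j k : ℕ) :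
    ((2 * k + j).factorial : ℚ) * PowerSeries.coeff (2 * k + j) (besselSeries j)
      = (2 * k + j).choose k := by
  have hk : (2 * k + j - j) / 2 = k := by omega
  rw [besselSeries, PowerSeries.coeff_mk, if_pos (by omega), hk, Nat.cast_choose ℚ (by omega),
    show 2 * k + j - k = k + j by omega]
  field_simp

/-- The exponential generating function for standard Young tableaux of height
at most 2 is `b₀(t) + b₁(t)`: the number of SYT of size `n` with at most 2 rows
(encoded as lattice words) equals `n! · [tⁿ](b₀ + b₁)`. -/
theorem syt_two_rows_egf (n : ℕ) :
    (Nat.card {f : Fin n → Fin 2 // ∀ j : Fin n,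
        (Finset.univ.filter (fun i => i ≤ j ∧ f i = 1)).card ≤
          (Finset.univ.filter (fun i => i ≤ j ∧ f i = (0 : Fin 2))).card} : ℚ)
      = (n.factorial : ℚ) *
          PowerSeries.coeff (R := ℚ) n (besselSeries 0 + besselSeries 1) := by
  have hcard : Nat.card {f : Fin n → Fin 2 // BallotWord.IsBallot f} = n.choose (n / 2) := by
    rw [Nat.card_eq_fintype_card, Fintype.card_subtype, BallotWord.card_isBallot]
  refine (congrArg (Nat.cast : ℕ → ℚ) hcard).trans ?_
  rw [map_add, mul_add]
  obtain ⟨k, rfl | rfl⟩ := n.even_or_odd'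
  · rw [coeff_besselSeries_of_odd (j := 1) (by omega), mul_zero, add_zero]
    simpa using (factorial_mul_coeff_besselSeries 0 k).symm
  · rw [coeff_besselSeries_of_odd (j := 0) (by omega), mul_zero, zero_add,
      factorial_mul_coeff_besselSeries 1 k, show (2 * k + 1) / 2 = k by omega]
end

section
/- For the finite group G of rational transformations of ℝ^{d−1} generated by φ_1: (z_1,…,z_{d−1}) ↦ (z_2/z_1, z_2, …, z_{d−1}), φ_k (for 1 < k < d−1): replacing z_k by z_{k−1}z_{k+1}/z_k, and φ_{d−1}: replacing z_{d−1} by z_{d−2}/z_{d−1}, the group G is isomorphic to the symmetric group S_d. -/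
/-!
Pad `z` to `(1, z₁, …, z_{d-1}, 1)` and pass to the ratios `w_j = z_j / z_{j-1}`, `j = 1, …, d`.
This identifies the `z`-space with the vectors `w ∈ (ℝˣ)^d` of product `1` (the inverse map takes
partial products), and in these coordinates `φ_i` merely swaps `w_i` and `w_{i+1}`. So `G` is the
image of `S_d` acting on such `w` by permuting coordinates, since the adjacent transpositions
generate `S_d`. The action is faithful: if `σ` moves `j`, it moves the vector with entry `2` at
`σ j`, entry `1/2` at `j` and `1` elsewhere.
-/

/-- The rational transformation `φ_i` of `(ℝ∖{0})^{d−1}` (0-indexed: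
`φ_i` replaces `z_i` by `z_{i−1}·z_{i+1}/z_i`, where the missing neighbour at
either boundary is replaced by 1). -/
def phiGen (d : ℕ) (i : Fin (d-1)) : Function.End (Fin (d-1) → ℝˣ) :=
  fun z => Function.update z i
    (((if _ : 0 < (i : ℕ) then z ⟨(i : ℕ) - 1, by have := i.isLt; omega⟩ else 1) *
      (if h : (i : ℕ) + 1 < d - 1 then z ⟨(i : ℕ) + 1, h⟩ else 1)) / z i)

namespace PhiGroup

variable {G : Type*} [CommGroup G] {n : ℕ}

def pad (z : Fin n → G) : Fin (n + 2) → G := Fin.cons 1 (Fin.snoc z 1)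

def ratios (z : Fin n → G) (j : Fin (n + 1)) : G := (pad z j.castSucc)⁻¹ * pad z j.succ

def ofRatios (w : Fin (n + 1) → G) (i : Fin n) : G := Fin.partialProd w i.castSucc.succ

@[simp] lemma pad_zero (z : Fin n → G) : pad z 0 = 1 := rfl

@[simp] lemma pad_last (z : Fin n → G) : pad z (Fin.last (n + 1)) = 1 := by
  simp [pad, ← Fin.succ_last]

@[simp] lemma pad_castSucc_succ (z : Fin n → G) (i : Fin n) : pad z i.castSucc.succ = z i := by
  simp [pad]

lemma pad_update (z : Fin n → G) (i : Fin n) (v : G) :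
    pad (Function.update z i v) = Function.update (pad z) i.castSucc.succ v := by
  rw [pad, Fin.snoc_update, Fin.cons_update]; rfl

lemma pad_apply (z : Fin n → G) (k : Fin (n + 2)) :
    pad z k = if h : 0 < (k : ℕ) ∧ (k : ℕ) - 1 < n then z ⟨k - 1, h.2⟩ else 1 := by
  induction k using Fin.cases with
  | zero => simp
  | succ k =>
    induction k using Fin.lastCases with
    | last => simp
    | cast i => simp [pad]

lemma partialProd_last (w : Fin n → G) : Fin.partialProd w (Fin.last n) = ∏ j, w j := by
  simp [Fin.partialProd, List.take_of_length_le, List.prod_ofFn]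

lemma partialProd_ratios (z : Fin n → G) : Fin.partialProd (ratios z) = pad z := by
  have h := Fin.partialProd_left_inv (pad z)
  rwa [pad_zero, one_smul] at h

lemma ofRatios_ratios (z : Fin n → G) : ofRatios (ratios z) = z := by
  funext i
  simp [ofRatios, partialProd_ratios]

lemma ratios_injective : Function.Injective (ratios : (Fin n → G) → Fin (n + 1) → G) :=
  Function.LeftInverse.injective ofRatios_ratios

lemma prod_ratios (z : Fin n → G) : ∏ j, ratios z j = 1 := by
  rw [← partialProd_last, partialProd_ratios, pad_last]

lemma pad_ofRatios {w : Fin (n + 1) → G} (hw : ∏ j, w j = 1) :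
    pad (ofRatios w) = Fin.partialProd w := by
  funext k
  induction k using Fin.cases with
  | zero => simp
  | succ k =>
    induction k using Fin.lastCases with
    | last => rw [Fin.succ_last, pad_last, partialProd_last, hw]
    | cast i => rw [pad_castSucc_succ]; rfl

lemma ratios_ofRatios {w : Fin (n + 1) → G} (hw : ∏ j, w j = 1) : ratios (ofRatios w) = w := by
  funext j
  simp only [ratios, pad_ofRatios hw, Fin.partialProd_right_inv]

lemma ratios_ofRatios_comp (z : Fin n → G) (σ : Equiv.Perm (Fin (n + 1))) :
    ratios (ofRatios (ratios z ∘ ⇑σ)) = ratios z ∘ ⇑σ :=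
  ratios_ofRatios (by rw [Function.comp_def, Equiv.prod_comp, prod_ratios])

variable (G n) in
def permAct : Equiv.Perm (Fin (n + 1)) →* Function.End (Fin n → G) where
  toFun σ z := ofRatios (ratios z ∘ ⇑σ⁻¹)
  map_one' := funext ofRatios_ratios
  map_mul' σ τ := funext fun z => ratios_injective <| by
    change _ = ratios (ofRatios (ratios (ofRatios (ratios z ∘ ⇑τ⁻¹)) ∘ ⇑σ⁻¹))
    simp only [ratios_ofRatios_comp, mul_inv_rev, Equiv.Perm.coe_mul, Function.comp_assoc]

lemma ratios_permAct (σ : Equiv.Perm (Fin (n + 1))) (z : Fin n → G) :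
    ratios (permAct G n σ z) = ratios z ∘ ⇑σ⁻¹ :=
  ratios_ofRatios_comp z σ⁻¹

lemma eq_one_of_forall_comp_eq {ι : Type*} [Fintype ι] [DecidableEq ι] {u : G} (hu : u ≠ u⁻¹)
    (σ : Equiv.Perm ι) (h : ∀ w : ι → G, ∏ j, w j = 1 → w ∘ σ = w) : σ = 1 := by
  by_contra hσ
  obtain ⟨j, hj⟩ : ∃ j, σ j ≠ j := by simpa [Equiv.ext_iff] using hσ
  let w : ι → G := Pi.mulSingle (σ j) u * Pi.mulSingle j u⁻¹
  have hw : ∏ k, w k = 1 := by simp [w, Finset.prod_mul_distrib]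
  exact hu (by simpa [w, hj, hj.symm] using congrFun (h w hw) j)

lemma permAct_injective {u : G} (hu : u ≠ u⁻¹) : Function.Injective (permAct G n) := by
  refine (injective_iff_map_eq_one _).2 fun σ hσ => ?_
  refine inv_eq_one.1 (eq_one_of_forall_comp_eq hu σ⁻¹ fun w hw => ?_)
  rw [← ratios_ofRatios hw, ← ratios_permAct, hσ]
  rfl

lemma pad_phiGen (i : Fin n) (z : Fin n → ℝˣ) :
    pad (phiGen (n + 1) i z) = Function.update (pad z) i.castSucc.succ
      (pad z i.castSucc.castSucc * pad z i.succ.succ / pad z i.castSucc.succ) := by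
  rw [phiGen, pad_update]
  congr 3 <;> simp [pad_apply, show (i : ℕ) - 1 < n by omega]

lemma ratios_phiGen (i : Fin n) (z : Fin n → ℝˣ) :
    ratios (phiGen (n + 1) i z) = ratios z ∘ Equiv.swap i.castSucc i.succ := by
  funext j
  simp only [ratios, pad_phiGen, Function.comp_apply]
  rcases eq_or_ne j i.castSucc with rfl | hi
  · rw [Function.update_of_ne (by simp [Fin.ext_iff]), Function.update_self,
      Equiv.swap_apply_left, ← Fin.succ_castSucc, mul_div_assoc, inv_mul_cancel_left,
      div_eq_inv_mul]
  rcases eq_or_ne j i.succ with rfl | hs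
  · rw [Fin.succ_castSucc, Function.update_self, Function.update_of_ne (by simp [Fin.ext_iff]),
      Equiv.swap_apply_right]
    simp [div_eq_mul_inv, mul_comm, mul_left_comm]
  · rw [Equiv.swap_apply_of_ne_of_ne hi hs, Function.update_of_ne, Function.update_of_ne]
    · simpa [Fin.ext_iff] using hi
    · simpa [Fin.ext_iff] using hs

lemma permAct_swap (i : Fin n) :
    permAct ℝˣ n (Equiv.swap i.castSucc i.succ) = phiGen (n + 1) i :=
  funext fun z => ratios_injective <| by
    rw [ratios_permAct, ratios_phiGen, Equiv.swap_inv]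

lemma mrange_permAct (n : ℕ) :
    MonoidHom.mrange (permAct ℝˣ n) =
      Submonoid.closure {f | ∃ i, f = phiGen (n + 1) i} := by
  rw [MonoidHom.mrange_eq_map, ← Equiv.Perm.mclosure_swap_castSucc_succ, MonoidHom.map_mclosure,
    ← Set.range_comp]
  congr 1
  ext f
  simp only [Set.mem_range, Function.comp_apply, permAct_swap, eq_comm]
  rfl

lemma mk0_two_ne_inv : Units.mk0 (2 : ℝ) two_ne_zero ≠ (Units.mk0 (2 : ℝ) two_ne_zero)⁻¹ := by
  rw [Ne, Units.ext_iff]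
  norm_num

end PhiGroup

open PhiGroup in
theorem phi_group_iso_symmetric_general (d : ℕ) :
    Nonempty
      ((Submonoid.closure {f : Function.End (Fin (d-1) → ℝˣ) | ∃ i, f = phiGen d i})
        ≃* Equiv.Perm (Fin d)) := by
  obtain _ | n := d
  · have : Subsingleton (Function.End (Fin 0 → ℝˣ)) :=
      inferInstanceAs (Subsingleton ((Fin 0 → ℝˣ) → Fin 0 → ℝˣ))
    exact ⟨@MulEquiv.ofUnique _ _ ⟨⟨1⟩, fun _ => Subsingleton.elim _ _⟩ _ _ _⟩
  · exact ⟨((MulEquiv.ofLeftInverse' _ (Function.leftInverse_invFun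
      (permAct_injective mk0_two_ne_inv))).trans (MulEquiv.submonoidCongr (mrange_permAct n))).symm⟩

/-- The group `G` generated by the rational transformations
`φ_1, …, φ_{d−1}` under composition is isomorphic to the symmetric group
`S_d`. -/
theorem phi_group_iso_symmetric (d : ℕ) (hd : 2 ≤ d) :
    Nonempty
      ((Submonoid.closure {f : Function.End (Fin (d-1) → ℝˣ) | ∃ i, f = phiGen d i})
        ≃* Equiv.Perm (Fin d)) :=
  phi_group_iso_symmetric_general d
end
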